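/- arXiv:2111.05180 — 6 statements merged into one kernel-verified Lean document; each statement's English description precedes it below -/
import Mathlib

section
/- Let X be an integrable real random variable on a probability space, let β ∈ (0,1), let ε > 0, and let t ∈ ℝ. Then the smoothed Rockafellar–Uryasev functional satisfies 0 ≤ R^ε_{t,β}[X] − R_{t,β}[X] ≤ ε·log 2/(1 − β), where R_{t,β}[X] = t + (1−β)^{−1}·E[(X − t)_+] and R^ε_{t,β}[X] = t + (1−β)^{−1}·E[g_ε(X − t)]. -/
open MeasureTheory

namespace Real

theorem max_le_log_one_add_exp (x : ℝ) : max x 0 ≤ log (1 + exp x) := by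
  have hpos : 0 < 1 + exp x := by positivity
  refine max_le ?_ (log_nonneg (by linarith [exp_pos x]))
  rw [le_log_iff_exp_le hpos]
  linarith

theorem log_one_add_exp_le (x : ℝ) : log (1 + exp x) ≤ max x 0 + log 2 := by
  have h : 1 + exp x ≤ 2 * exp (max x 0) := by
    have hx : exp x ≤ exp (max x 0) := exp_le_exp.2 (le_max_left x 0)
    have h0 : 1 ≤ exp (max x 0) := one_le_exp (le_max_right x 0)
    linarith
  calc log (1 + exp x) ≤ log (2 * exp (max x 0)) := log_le_log (by positivity) h
    _ = max x 0 + log 2 := by rw [log_mul two_ne_zero (exp_pos _).ne', log_exp, add_comm]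

variable {ε : ℝ} (hε : 0 < ε) (x : ℝ)
include hε

theorem max_le_mul_log_one_add_exp_div : max x 0 ≤ ε * log (1 + exp (x / ε)) := by
  calc max x 0 = ε * max (x / ε) 0 := by
        rw [mul_max_of_nonneg _ _ hε.le, mul_div_cancel₀ _ hε.ne', mul_zero]
    _ ≤ ε * log (1 + exp (x / ε)) := mul_le_mul_of_nonneg_left (max_le_log_one_add_exp _) hε.le

theorem mul_log_one_add_exp_div_le : ε * log (1 + exp (x / ε)) ≤ max x 0 + ε * log 2 := by
  calc ε * log (1 + exp (x / ε)) ≤ ε * (max (x / ε) 0 + log 2) :=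
        mul_le_mul_of_nonneg_left (log_one_add_exp_le _) hε.le
    _ = max x 0 + ε * log 2 := by
        rw [mul_add, mul_max_of_nonneg _ _ hε.le, mul_div_cancel₀ _ hε.ne', mul_zero]

end Real

theorem integral_le_integral_le_integral_add_const {Ω : Type*} [MeasurableSpace Ω]
    {μ : Measure Ω} [IsProbabilityMeasure μ] {f g : Ω → ℝ} {c : ℝ} (hf : Integrable f μ)
    (hg : AEStronglyMeasurable g μ) (hfg : ∀ᵐ ω ∂μ, f ω ≤ g ω)
    (hgf : ∀ᵐ ω ∂μ, g ω ≤ f ω + c) :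
    ∫ ω, f ω ∂μ ≤ ∫ ω, g ω ∂μ ∧
      ∫ ω, g ω ∂μ ≤ ∫ ω, f ω ∂μ + c := by
  have hfc : Integrable (fun ω ↦ f ω + c) μ := hf.add (integrable_const c)
  have hg_int : Integrable g μ := integrable_of_le_of_le hg hfg hgf hf hfc
  refine ⟨integral_mono_ae hf hg_int hfg, ?_⟩
  calc ∫ ω, g ω ∂μ ≤ ∫ ω, f ω + c ∂μ := integral_mono_ae hg_int hfc hgf
    _ = ∫ ω, f ω ∂μ + c := by
        rw [integral_add hf (integrable_const c), integral_const, probReal_univ, one_smul]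

/-- For an integrable random variable `X`, `β ∈ (0,1)`, `ε > 0` and `t ∈ ℝ`, the smoothed
Rockafellar–Uryasev functional `R^ε_{t,β}[X] = t + (1−β)⁻¹·E[g_ε(X−t)]` with
`g_ε(x) = ε·log(1+exp(x/ε))` satisfies
`0 ≤ R^ε_{t,β}[X] − R_{t,β}[X] ≤ ε·log 2/(1−β)`, where
`R_{t,β}[X] = t + (1−β)⁻¹·E[(X−t)₊]`. -/
theorem smoothed_RU_functional_bias {Ω : Type*} [MeasurableSpace Ω]
    (μ : Measure Ω) [IsProbabilityMeasure μ] (X : Ω → ℝ) (hX : Integrable X μ)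
    (β : ℝ) (hβ : β ∈ Set.Ioo (0 : ℝ) 1) (ε : ℝ) (hε : 0 < ε) (t : ℝ) :
    0 ≤ (t + (1 - β)⁻¹ * ∫ ω, ε * Real.log (1 + Real.exp ((X ω - t) / ε)) ∂μ)
        - (t + (1 - β)⁻¹ * ∫ ω, max (X ω - t) 0 ∂μ) ∧
    (t + (1 - β)⁻¹ * ∫ ω, ε * Real.log (1 + Real.exp ((X ω - t) / ε)) ∂μ)
        - (t + (1 - β)⁻¹ * ∫ ω, max (X ω - t) 0 ∂μ) ≤ ε * Real.log 2 / (1 - β) := by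
  have hinv : 0 ≤ (1 - β)⁻¹ := inv_nonneg.2 (by linarith [hβ.2])
  have hsmooth : Measurable fun x : ℝ ↦ ε * Real.log (1 + Real.exp ((x - t) / ε)) := by
    fun_prop
  have hsmooth_meas :
      AEStronglyMeasurable (fun ω ↦ ε * Real.log (1 + Real.exp ((X ω - t) / ε))) μ :=
    (hsmooth.comp_aemeasurable hX.aemeasurable).aestronglyMeasurable
  obtain ⟨hlower, hupper⟩ := integral_le_integral_le_integral_add_const
    (hX.sub (integrable_const t)).pos_part hsmooth_meas
    (.of_forall fun ω ↦ Real.max_le_mul_log_one_add_exp_div hε _)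
    (.of_forall fun ω ↦ Real.mul_log_one_add_exp_div_le hε _)
  rw [add_sub_add_left_eq_sub, ← mul_sub, div_eq_inv_mul]
  exact ⟨mul_nonneg hinv (sub_nonneg.2 hlower),
    mul_le_mul_of_nonneg_left (sub_le_iff_le_add'.2 hupper) hinv⟩
end

section
/- Let X be an integrable real random variable, β ∈ (0,1), and ε > 0. Then the smoothed CVaR value satisfies |inf_{t∈ℝ} R^ε_{t,β}[X] − CVaR_β[X]| ≤ ε·log 2/(1 − β), where CVaR_β[X] = inf_{t∈ℝ} R_{t,β}[X]. -/
/-!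
The softplus `g_ε(x) = ε log(1 + exp(x/ε))` is squeezed between `x₊` and `x₊ + ε log 2`, because
`e^{x/ε} ≤ 1 + e^{x/ε} ≤ 2 e^{(x/ε)₊}`. Integrating, the smoothed Rockafellar–Uryasev functional
lies between the unsmoothed one and the unsmoothed one plus `ε log 2 / (1 - β)`, uniformly in `t`,
and the same sandwich passes to the infima over `t`. These infima are finite since, for
`(1 - β)⁻¹ ≥ 1`, the functional is bounded below by `E[X]`.
-/

open MeasureTheory Real Set

noncomputable def smoothPlus (ε x : ℝ) : ℝ := ε * log (1 + exp (x / ε))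

section SmoothPlus

variable {ε : ℝ}

lemma max_le_smoothPlus (hε : 0 < ε) (x : ℝ) : max x 0 ≤ smoothPlus ε x := by
  have hlog_ge : x / ε ≤ log (1 + exp (x / ε)) :=
    (le_log_iff_exp_le (by positivity)).2 (by linarith [exp_pos (x / ε)])
  have hlog_nonneg : 0 ≤ log (1 + exp (x / ε)) :=
    log_nonneg (by linarith [exp_pos (x / ε)])
  refine max_le ?_ (mul_nonneg hε.le hlog_nonneg)
  calc x = ε * (x / ε) := by field_simp
    _ ≤ smoothPlus ε x := mul_le_mul_of_nonneg_left hlog_ge hε.le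

lemma smoothPlus_le_max_add (hε : 0 < ε) (x : ℝ) :
    smoothPlus ε x ≤ max x 0 + ε * log 2 := by
  set y := x / ε
  have hsum_le : 1 + exp y ≤ 2 * exp (max y 0) := by
    have h₁ : 1 ≤ exp (max y 0) := one_le_exp (le_max_right y 0)
    have h₂ : exp y ≤ exp (max y 0) := exp_le_exp.2 (le_max_left y 0)
    linarith
  have hlog_le : log (1 + exp y) ≤ log 2 + max y 0 := by
    calc log (1 + exp y) ≤ log (2 * exp (max y 0)) := log_le_log (by positivity) hsum_le
      _ = log 2 + max y 0 := by rw [log_mul two_ne_zero (exp_ne_zero _), log_exp]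
  have hscale : ε * max y 0 = max x 0 := by
    rw [mul_max_of_nonneg _ _ hε.le, mul_zero, mul_div_cancel₀ x hε.ne']
  calc smoothPlus ε x ≤ ε * (log 2 + max y 0) := mul_le_mul_of_nonneg_left hlog_le hε.le
    _ = max x 0 + ε * log 2 := by rw [mul_add, hscale, add_comm]

lemma measurable_smoothPlus : Measurable (smoothPlus ε) := by
  unfold smoothPlus
  fun_prop

end SmoothPlus

lemma abs_ciInf_sub_ciInf_le {ι : Type*} [Nonempty ι] {f g : ι → ℝ} {δ : ℝ}
    (hf : BddBelow (range f)) (hfg : ∀ i, f i ≤ g i) (hgf : ∀ i, g i ≤ f i + δ) :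
    |(⨅ i, g i) - ⨅ i, f i| ≤ δ := by
  obtain ⟨b, hb⟩ := hf
  have hg : BddBelow (range g) :=
    ⟨b, forall_mem_range.2 fun i => (hb (mem_range_self i)).trans (hfg i)⟩
  have hle : (⨅ i, f i) ≤ ⨅ i, g i := ciInf_mono ⟨b, hb⟩ hfg
  have hge : (⨅ i, g i) - δ ≤ ⨅ i, f i :=
    le_ciInf fun i => by linarith [ciInf_le hg i, hgf i]
  obtain ⟨i⟩ := ‹Nonempty ι›
  rw [abs_sub_le_iff]
  constructor <;> linarith [hfg i, hgf i]

section RockafellarUryasev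

variable {Ω : Type*} [MeasurableSpace Ω] {μ : Measure Ω} [IsProbabilityMeasure μ] {X : Ω → ℝ}

lemma integral_add_const {f : Ω → ℝ} (hf : Integrable f μ) (c : ℝ) :
    ∫ ω, (f ω + c) ∂μ = ∫ ω, f ω ∂μ + c := by
  rw [integral_add hf (integrable_const c), integral_const, probReal_univ, one_smul]

lemma integrable_max_sub_zero (hX : Integrable X μ) (t : ℝ) :
    Integrable (fun ω => max (X ω - t) 0) μ :=
  (hX.sub (integrable_const t)).pos_part

lemma integral_le_add_mul_integral_max_sub (hX : Integrable X μ) {c : ℝ} (hc : 1 ≤ c) (t : ℝ) :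
    ∫ ω, X ω ∂μ ≤ t + c * ∫ ω, max (X ω - t) 0 ∂μ := by
  have hmean : ∫ ω, X ω ∂μ - t ≤ ∫ ω, max (X ω - t) 0 ∂μ := by
    rw [sub_eq_add_neg, ← integral_add_const hX]
    exact integral_mono (hX.add (integrable_const (-t))) (integrable_max_sub_zero hX t)
      fun ω => le_max_left (X ω + -t) 0
  have hnonneg : 0 ≤ ∫ ω, max (X ω - t) 0 ∂μ := integral_nonneg fun ω => le_max_right _ _
  linarith [le_mul_of_one_le_left hnonneg hc]

variable {φ : ℝ → ℝ} {δ : ℝ}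

lemma integrable_comp_sub_of_max_le_le (hφ : Measurable φ) (hlo : ∀ x, max x 0 ≤ φ x)
    (hhi : ∀ x, φ x ≤ max x 0 + δ) (hX : Integrable X μ) (t : ℝ) :
    Integrable (fun ω => φ (X ω - t)) μ := by
  refine ((integrable_max_sub_zero hX t).add (integrable_const δ)).mono'
    (hφ.comp_aemeasurable (hX.aemeasurable.sub_const t)).aestronglyMeasurable
    (ae_of_all _ fun ω => ?_)
  have hφ_nonneg : 0 ≤ φ (X ω - t) := (le_max_right _ _).trans (hlo _)
  rw [norm_of_nonneg hφ_nonneg]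
  exact hhi _

theorem abs_iInf_sub_iInf_le_of_max_le_le (hφ : Measurable φ) (hlo : ∀ x, max x 0 ≤ φ x)
    (hhi : ∀ x, φ x ≤ max x 0 + δ) (hX : Integrable X μ) {c : ℝ} (hc : 1 ≤ c) :
    |(⨅ t : ℝ, (t + c * ∫ ω, φ (X ω - t) ∂μ)) - (⨅ t : ℝ, (t + c * ∫ ω, max (X ω - t) 0 ∂μ))|
      ≤ c * δ := by
  have hφi := integrable_comp_sub_of_max_le_le hφ hlo hhi hX
  have hc₀ : 0 ≤ c := zero_le_one.trans hc
  refine abs_ciInf_sub_ciInf_le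
    ⟨_, forall_mem_range.2 (integral_le_add_mul_integral_max_sub hX hc)⟩ (fun t => ?_) fun t => ?_
  · gcongr t + c * ?_
    exact integral_mono (integrable_max_sub_zero hX t) (hφi t) fun ω => hlo _
  · have hupper : ∫ ω, φ (X ω - t) ∂μ ≤ ∫ ω, max (X ω - t) 0 ∂μ + δ := by
      rw [← integral_add_const (integrable_max_sub_zero hX t)]
      exact integral_mono (hφi t) ((integrable_max_sub_zero hX t).add (integrable_const δ))
        fun ω => hhi (X ω - t)
    linarith [mul_le_mul_of_nonneg_left hupper hc₀, mul_add c (∫ ω, max (X ω - t) 0 ∂μ) δ]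

end RockafellarUryasev

/-- For an integrable random variable `X`, `β ∈ (0,1)` and `ε > 0`, the smoothed CVaR
`inf_t R^ε_{t,β}[X]` is within `ε·log 2/(1−β)` of `CVaR_β[X] = inf_t R_{t,β}[X]`, where
`R_{t,β}[X] = t + (1−β)⁻¹·E[(X−t)₊]` and `R^ε_{t,β}[X] = t + (1−β)⁻¹·E[g_ε(X−t)]`
with `g_ε(x) = ε·log(1+exp(x/ε))`. -/
theorem smoothed_CVaR_bias {Ω : Type*} [MeasurableSpace Ω]
    (μ : Measure Ω) [IsProbabilityMeasure μ] (X : Ω → ℝ) (hX : Integrable X μ)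
    (β : ℝ) (hβ : β ∈ Set.Ioo (0 : ℝ) 1) (ε : ℝ) (hε : 0 < ε) :
    |(⨅ t : ℝ, (t + (1 - β)⁻¹ * ∫ ω, ε * Real.log (1 + Real.exp ((X ω - t) / ε)) ∂μ))
      - (⨅ t : ℝ, (t + (1 - β)⁻¹ * ∫ ω, max (X ω - t) 0 ∂μ))| ≤ ε * Real.log 2 / (1 - β) := by
  have hc : 1 ≤ (1 - β)⁻¹ := one_le_inv₀ (by linarith [hβ.2]) |>.2 (by linarith [hβ.1])
  rw [div_eq_inv_mul]
  exact abs_iInf_sub_iInf_le_of_max_le_le measurable_smoothPlus (max_le_smoothPlus hε)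
    (smoothPlus_le_max_add hε) hX hc
end

section
/- Let X be an integrable real random variable on a probability space and β ∈ (0,1). Define the Value-at-Risk VaR_β[X] = inf{t ∈ ℝ : ℙ[X ≤ t] ≥ β}. Then the infimum in the Rockafellar–Uryasev formula is attained at t = VaR_β[X], i.e. CVaR_β[X] = inf_{t∈ℝ} { t + (1−β)^{−1}·E[(X − t)_+] } = VaR_β[X] + (1−β)^{−1}·E[(X − VaR_β[X])_+]. -/
/-! Pass to the law `ν` of `X` and let `g t = t + (1-β)⁻¹ E[(X-t)₊]`. Integrating the pointwise
inequality `(x-v)₊ ≤ (x-t)₊ + (t-v)·1_S(x)`, with `S = {x > v}` for `t ≥ v` and `S = {x ≥ v}`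
for `t ≤ v`, gives `E[(X-v)₊] ≤ E[(X-t)₊] + (t-v) ν(S)`. At `v = VaR_β`, right-continuity of the
cdf gives `ν(x > v) ≤ 1-β` and minimality of `v` gives `ν(x ≥ v) ≥ 1-β`; in both cases
`(t-v) ν(S) ≤ (t-v)(1-β)`, which is `g v ≤ g t`. -/

open MeasureTheory ProbabilityTheory Filter Topology Set

noncomputable def valueAtRisk (ν : Measure ℝ) (β : ℝ) : ℝ := sInf {t | β ≤ cdf ν t}

noncomputable def rockafellarUryasev (ν : Measure ℝ) (β t : ℝ) : ℝ :=
  t + (1 - β)⁻¹ * ∫ x, max (x - t) 0 ∂ν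

section ValueAtRisk

variable {ν : Measure ℝ} {β : ℝ}

lemma nonempty_setOf_le_cdf (hβ : β < 1) : {t | β ≤ cdf ν t}.Nonempty :=
  (((tendsto_order.1 (tendsto_cdf_atTop ν)).1 β hβ).exists).imp fun _ ↦ le_of_lt

lemma bddBelow_setOf_le_cdf (hβ : 0 < β) : BddBelow {t | β ≤ cdf ν t} := by
  obtain ⟨a, ha⟩ := eventually_atBot.1 ((tendsto_order.1 (tendsto_cdf_atBot ν)).2 β hβ)
  exact ⟨a, fun t ht ↦ le_of_not_ge fun hta ↦ (ha t hta).not_ge ht⟩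

lemma le_cdf_valueAtRisk (hβ : β < 1) : β ≤ cdf ν (valueAtRisk ν β) := by
  have hright : Tendsto (cdf ν) (𝓝[>] (valueAtRisk ν β)) (𝓝 (cdf ν (valueAtRisk ν β))) :=
    ((cdf ν).right_continuous _).mono Ioi_subset_Ici_self
  refine ge_of_tendsto hright (eventually_nhdsWithin_of_forall fun t ht ↦ ?_)
  obtain ⟨s, hs, hst⟩ := exists_lt_of_csInf_lt (nonempty_setOf_le_cdf hβ) ht
  exact hs.trans (monotone_cdf ν hst.le)

lemma leftLim_cdf_valueAtRisk_le (hβ : 0 < β) :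
    Function.leftLim (cdf ν) (valueAtRisk ν β) ≤ β := by
  refine le_of_tendsto ((monotone_cdf ν).tendsto_leftLim _)
    (eventually_nhdsWithin_of_forall fun t ht ↦ le_of_not_gt fun hβt ↦ ?_)
  exact (csInf_le (bddBelow_setOf_le_cdf hβ) hβt.le).not_gt ht

variable [IsProbabilityMeasure ν]

lemma measureReal_Ioi_eq_one_sub_cdf (x : ℝ) : ν.real (Ioi x) = 1 - cdf ν x := by
  have h := (cdf ν).measure_Ioi (tendsto_cdf_atTop ν) x
  rw [measure_cdf] at h
  rw [measureReal_def, h, ENNReal.toReal_ofReal (sub_nonneg.2 (cdf_le_one ν x))]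

lemma measureReal_Ici_eq_one_sub_leftLim_cdf (x : ℝ) :
    ν.real (Ici x) = 1 - Function.leftLim (cdf ν) x := by
  have h := (cdf ν).measure_Ici (tendsto_cdf_atTop ν) x
  rw [measure_cdf] at h
  rw [measureReal_def, h, ENNReal.toReal_ofReal (sub_nonneg.2
    (((monotone_cdf ν).leftLim_le le_rfl).trans (cdf_le_one ν x)))]

end ValueAtRisk

lemma posPart_sub_le_add_indicator_Ioi {v t : ℝ} (h : v ≤ t) (x : ℝ) :
    max (x - v) 0 ≤ max (x - t) 0 + (Ioi v).indicator (fun _ ↦ t - v) x := by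
  by_cases hx : x ∈ Ioi v
  · rw [indicator_of_mem hx]
    exact max_le (by linarith [le_max_left (x - t) 0]) (by linarith [le_max_right (x - t) 0])
  · rw [indicator_of_notMem hx, max_eq_right (by linarith [not_lt.1 (mt mem_Ioi.2 hx)])]
    simp

lemma posPart_sub_le_add_indicator_Ici {v t : ℝ} (h : t ≤ v) (x : ℝ) :
    max (x - v) 0 ≤ max (x - t) 0 + (Ici v).indicator (fun _ ↦ t - v) x := by
  by_cases hx : x ∈ Ici v
  · rw [indicator_of_mem hx, max_eq_left (by linarith [mem_Ici.1 hx]),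
      max_eq_left (by linarith [mem_Ici.1 hx])]
    linarith
  · rw [indicator_of_notMem hx, max_eq_right (by linarith [not_le.1 (mt mem_Ici.2 hx)])]
    simp

section Integral

variable {ν : Measure ℝ} [IsFiniteMeasure ν]

lemma integral_posPart_sub_le {v t : ℝ} (hν : Integrable id ν) {s : Set ℝ}
    (hs : MeasurableSet s)
    (h : ∀ x, max (x - v) 0 ≤ max (x - t) 0 + s.indicator (fun _ ↦ t - v) x) :
    ∫ x, max (x - v) 0 ∂ν ≤ ∫ x, max (x - t) 0 ∂ν + (t - v) * ν.real s := by
  have hint : ∀ a : ℝ, Integrable (fun x ↦ max (x - a) 0) ν :=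
    fun a ↦ (hν.sub (integrable_const a)).pos_part
  calc ∫ x, max (x - v) 0 ∂ν
      ≤ ∫ x, (max (x - t) 0 + s.indicator (fun _ ↦ t - v) x) ∂ν :=
        integral_mono (hint v) ((hint t).add ((integrable_const _).indicator hs)) h
    _ = ∫ x, max (x - t) 0 ∂ν + (t - v) * ν.real s := by
        rw [integral_add (hint t) ((integrable_const _).indicator hs),
          integral_indicator_const _ hs, smul_eq_mul, mul_comm]

lemma rockafellarUryasev_le {β v t : ℝ} (hβ : β < 1) (hν : Integrable id ν) {s : Set ℝ}
    (hs : MeasurableSet s)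
    (h : ∀ x, max (x - v) 0 ≤ max (x - t) 0 + s.indicator (fun _ ↦ t - v) x)
    (hsub : (t - v) * ν.real s ≤ (t - v) * (1 - β)) :
    rockafellarUryasev ν β v ≤ rockafellarUryasev ν β t := by
  have hc : 0 < 1 - β := sub_pos.2 hβ
  have hint := mul_le_mul_of_nonneg_left (integral_posPart_sub_le hν hs h) (inv_pos.2 hc).le
  have hsub' : (1 - β)⁻¹ * ((t - v) * ν.real s) ≤ t - v := by
    rw [inv_mul_le_iff₀ hc]
    linarith
  unfold rockafellarUryasev
  linarith

end Integral

lemma rockafellarUryasev_valueAtRisk_le {ν : Measure ℝ} [IsProbabilityMeasure ν]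
    (hν : Integrable id ν) {β : ℝ} (hβ : β ∈ Ioo 0 1) (t : ℝ) :
    rockafellarUryasev ν β (valueAtRisk ν β) ≤ rockafellarUryasev ν β t := by
  rcases le_total (valueAtRisk ν β) t with hvt | htv
  · refine rockafellarUryasev_le hβ.2 hν measurableSet_Ioi (posPart_sub_le_add_indicator_Ioi hvt)
      (mul_le_mul_of_nonneg_left ?_ (sub_nonneg.2 hvt))
    rw [measureReal_Ioi_eq_one_sub_cdf]
    linarith [le_cdf_valueAtRisk (ν := ν) hβ.2]
  · refine rockafellarUryasev_le hβ.2 hν measurableSet_Ici (posPart_sub_le_add_indicator_Ici htv)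
      (mul_le_mul_of_nonpos_left ?_ (sub_nonpos.2 htv))
    rw [measureReal_Ici_eq_one_sub_leftLim_cdf]
    linarith [leftLim_cdf_valueAtRisk_le (ν := ν) hβ.1]

theorem iInf_rockafellarUryasev_eq {ν : Measure ℝ} [IsProbabilityMeasure ν]
    (hν : Integrable id ν) {β : ℝ} (hβ : β ∈ Ioo 0 1) :
    ⨅ t, rockafellarUryasev ν β t = rockafellarUryasev ν β (valueAtRisk ν β) :=
  IsGLB.ciInf_eq
    (IsLeast.isGLB ⟨mem_range_self _, forall_mem_range.2 (rockafellarUryasev_valueAtRisk_le hν hβ)⟩)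

lemma cdf_map_eq_toReal {Ω : Type*} [MeasurableSpace Ω] {μ : Measure Ω} [IsProbabilityMeasure μ]
    {X : Ω → ℝ} (hX : AEMeasurable X μ) (t : ℝ) :
    cdf (μ.map X) t = (μ {ω | X ω ≤ t}).toReal := by
  have := Measure.isProbabilityMeasure_map hX
  rw [cdf_eq_real, measureReal_def, Measure.map_apply_of_aemeasurable hX measurableSet_Iic]
  rfl

/-- For an integrable random variable `X` on a probability space and `β ∈ (0,1)`, the infimum
in the Rockafellar–Uryasev formula for `CVaR_β[X]` is attained at
`t = VaR_β[X] = inf {t : ℙ[X ≤ t] ≥ β}`: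
`⨅ t, (t + (1−β)⁻¹·E[(X−t)₊]) = VaR_β[X] + (1−β)⁻¹·E[(X − VaR_β[X])₊]`. -/
theorem CVaR_inf_attained_at_VaR {Ω : Type*} [MeasurableSpace Ω]
    (μ : Measure Ω) [IsProbabilityMeasure μ] (X : Ω → ℝ) (hX : Integrable X μ)
    (β : ℝ) (hβ : β ∈ Set.Ioo (0 : ℝ) 1)
    (v : ℝ) (hv : v = sInf {t : ℝ | β ≤ (μ {ω | X ω ≤ t}).toReal}) :
    (⨅ t : ℝ, (t + (1 - β)⁻¹ * ∫ ω, max (X ω - t) 0 ∂μ))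
      = v + (1 - β)⁻¹ * ∫ ω, max (X ω - v) 0 ∂μ := by
  have hXm := hX.aemeasurable
  have := Measure.isProbabilityMeasure_map hXm
  have hlaw : Integrable id (μ.map X) := (integrable_map_measure aestronglyMeasurable_id hXm).2 hX
  have hRU (t : ℝ) :
      t + (1 - β)⁻¹ * ∫ ω, max (X ω - t) 0 ∂μ = rockafellarUryasev (μ.map X) β t := by
    rw [rockafellarUryasev, integral_map hXm (by fun_prop)]
  have hVaR : v = valueAtRisk (μ.map X) β := by simp_rw [hv, valueAtRisk, cdf_map_eq_toReal hXm]
  simp_rw [hRU, hVaR]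
  exact iInf_rockafellarUryasev_eq hlaw hβ
end

section
/- Let X be an integrable real random variable on a probability space and β ∈ (0,1), and suppose ℙ[X ≤ VaR_β[X]] = β (as holds when X has a continuous distribution). Then CVaR_β[X] = (1−β)^{−1}·E[X·1_{{X > VaR_β[X]}}]; that is, since ℙ[X > VaR_β[X]] = 1 − β > 0, CVaR_β[X] equals the conditional expectation E[X | X > VaR_β[X]], the average of the β-tail of the distribution of X. -/
/-!
Write `S = {v < X}` and `c = ℙ[S]`. Pointwise `(X - t)₊ ≥ (X - t)·1_S`, with equality when
`t = v`; integrating, `E[(X - t)₊] ≥ E[X·1_S] - t·c`, with equality at `t = v`. Hence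
`t + c⁻¹·E[(X - t)₊] ≥ c⁻¹·E[X·1_S]`, and the infimum is attained at `t = v`. Finally
`ℙ[X ≤ v] = β` gives `c = 1 - β`.
-/

open MeasureTheory

section

variable {Ω : Type*} [MeasurableSpace Ω] {μ : Measure Ω} [IsFiniteMeasure μ] {X : Ω → ℝ}

lemma setIntegral_sub_const (hX : Integrable X μ) (s : Set Ω) (t : ℝ) :
    ∫ ω in s, (X ω - t) ∂μ = ∫ ω in s, X ω ∂μ - t * μ.real s := by
  rw [integral_sub hX.integrableOn (integrable_const t), setIntegral_const, smul_eq_mul, mul_comm]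

lemma setIntegral_sub_const_le_integral_max_sub (hX : Integrable X μ) (s : Set Ω) (t : ℝ) :
    ∫ ω in s, X ω ∂μ - t * μ.real s ≤ ∫ ω, max (X ω - t) 0 ∂μ := by
  have hXt : Integrable (fun ω ↦ X ω - t) μ := hX.sub (integrable_const t)
  calc ∫ ω in s, X ω ∂μ - t * μ.real s = ∫ ω in s, (X ω - t) ∂μ :=
        (setIntegral_sub_const hX s t).symm
    _ ≤ ∫ ω in s, max (X ω - t) 0 ∂μ :=
      setIntegral_mono hXt.integrableOn hXt.pos_part.integrableOn fun _ ↦ le_max_left _ _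
    _ ≤ ∫ ω, max (X ω - t) 0 ∂μ :=
      setIntegral_le_integral hXt.pos_part (Filter.Eventually.of_forall fun _ ↦ le_max_right _ _)

lemma integral_max_sub_eq_setIntegral_sub_const (hX : Integrable X μ) (v : ℝ) :
    ∫ ω, max (X ω - v) 0 ∂μ = ∫ ω in {ω | v < X ω}, X ω ∂μ - v * μ.real {ω | v < X ω} := by
  have hS : NullMeasurableSet {ω | v < X ω} μ :=
    nullMeasurableSet_lt aemeasurable_const hX.aemeasurable
  rw [← setIntegral_sub_const hX, ← setIntegral_eq_integral_of_forall_compl_eq_zero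
    fun ω (hω : ¬ v < X ω) ↦ max_eq_right (by linarith [not_lt.1 hω])]
  exact setIntegral_congr_fun₀ hS fun ω (hω : v < X ω) ↦ max_eq_left (by linarith)

theorem iInf_add_inv_mul_integral_max_sub (hX : Integrable X μ) (v : ℝ)
    (hc : 0 < μ.real {ω | v < X ω}) :
    ⨅ t : ℝ, (t + (μ.real {ω | v < X ω})⁻¹ * ∫ ω, max (X ω - t) 0 ∂μ)
      = (μ.real {ω | v < X ω})⁻¹ * ∫ ω in {ω | v < X ω}, X ω ∂μ := by
  set c := μ.real {ω | v < X ω}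
  set m := ∫ ω in {ω | v < X ω}, X ω ∂μ
  have hlower (t : ℝ) : c⁻¹ * m ≤ t + c⁻¹ * ∫ ω, max (X ω - t) 0 ∂μ :=
    calc c⁻¹ * m = t + c⁻¹ * (m - t * c) := by field_simp; ring
      _ ≤ _ := by gcongr; exact setIntegral_sub_const_le_integral_max_sub hX _ t
  have hattained : v + c⁻¹ * ∫ ω, max (X ω - v) 0 ∂μ = c⁻¹ * m := by
    rw [integral_max_sub_eq_setIntegral_sub_const hX v]; field_simp; ring
  exact le_antisymm (hattained ▸ ciInf_le ⟨_, Set.forall_mem_range.2 hlower⟩ v) (le_ciInf hlower)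

end

theorem CVaR_eq_tail_average_general {Ω : Type*} [MeasurableSpace Ω]
    (μ : Measure Ω) [IsProbabilityMeasure μ] (X : Ω → ℝ) (hX : Integrable X μ)
    (β : ℝ) (hβ : β ∈ Set.Ioo (0 : ℝ) 1)
    (v : ℝ)
    (hq : (μ {ω | X ω ≤ v}).toReal = β) :
    (μ {ω | v < X ω}).toReal = 1 - β ∧
    (⨅ t : ℝ, (t + (1 - β)⁻¹ * ∫ ω, max (X ω - t) 0 ∂μ))
      = (1 - β)⁻¹ * ∫ ω in {ω | v < X ω}, X ω ∂μ := by
  have htail : μ.real {ω | v < X ω} = 1 - β := by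
    have hcompl : {ω | v < X ω} = {ω | X ω ≤ v}ᶜ := by ext; simp
    rw [hcompl, measureReal_compl₀ (nullMeasurableSet_le hX.aemeasurable aemeasurable_const),
      probReal_univ, measureReal_def, hq]
  refine ⟨htail, ?_⟩
  rw [← htail]
  exact iInf_add_inv_mul_integral_max_sub hX v (htail ▸ sub_pos.2 hβ.2)

/-- Let `X` be integrable on a probability space, `β ∈ (0,1)`, and suppose
`ℙ[X ≤ VaR_β[X]] = β` (as holds for a continuous distribution), where
`VaR_β[X] = inf {t : ℙ[X ≤ t] ≥ β}`. Then `ℙ[X > VaR_β[X]] = 1 − β > 0` and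
`CVaR_β[X] = (1−β)⁻¹·E[X·1_{X > VaR_β[X]}]`, i.e. `CVaR_β[X]` is the average of the
`β`-tail of the distribution of `X`. -/
theorem CVaR_eq_tail_average {Ω : Type*} [MeasurableSpace Ω]
    (μ : Measure Ω) [IsProbabilityMeasure μ] (X : Ω → ℝ) (hX : Integrable X μ)
    (β : ℝ) (hβ : β ∈ Set.Ioo (0 : ℝ) 1)
    (v : ℝ) (hv : v = sInf {t : ℝ | β ≤ (μ {ω | X ω ≤ t}).toReal})
    (hq : (μ {ω | X ω ≤ v}).toReal = β) :
    (μ {ω | v < X ω}).toReal = 1 - β ∧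
    (⨅ t : ℝ, (t + (1 - β)⁻¹ * ∫ ω, max (X ω - t) 0 ∂μ))
      = (1 - β)⁻¹ * ∫ ω in {ω | v < X ω}, X ω ∂μ :=
  CVaR_eq_tail_average_general μ X hX β hβ v hq
end

section
/- Let X and Y be integrable real random variables on a common probability space and β ∈ (0,1). Then CVaR is sub-additive: CVaR_β[X + Y] ≤ CVaR_β[X] + CVaR_β[Y]. -/
open MeasureTheory

lemma cvar_bdd {Ω : Type*} [MeasurableSpace Ω]
    (μ : Measure Ω) [IsProbabilityMeasure μ] (Z : Ω → ℝ)
    (hZ : Integrable Z μ) (c : ℝ) (hc : 1 ≤ c) :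
    BddBelow (Set.range (fun t : ℝ => t + c * ∫ ω, max (Z ω - t) 0 ∂μ)) := by
  refine ⟨min 0 (c * ∫ ω, Z ω ∂μ), ?_⟩
  rintro x ⟨t, rfl⟩
  have hint : Integrable (fun ω => max (Z ω - t) 0) μ :=
    (hZ.sub (integrable_const t)).pos_part
  have hnn : 0 ≤ ∫ ω, max (Z ω - t) 0 ∂μ :=
    integral_nonneg fun ω => le_max_right _ _
  rcases le_or_gt 0 t with ht | ht
  · have : (0:ℝ) ≤ t + c * ∫ ω, max (Z ω - t) 0 ∂μ := by
      have : 0 ≤ c * ∫ ω, max (Z ω - t) 0 ∂μ :=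
        mul_nonneg (by linarith) hnn
      linarith
    exact le_trans (min_le_left _ _) this
  · refine le_trans (min_le_right _ _) ?_
    have h1 : ∫ ω, (Z ω - t) ∂μ ≤ ∫ ω, max (Z ω - t) 0 ∂μ :=
      integral_mono (hZ.sub (integrable_const t)) hint fun ω => le_max_left _ _
    have h2 : ∫ ω, (Z ω - t) ∂μ = (∫ ω, Z ω ∂μ) - t := by
      rw [integral_sub hZ (integrable_const t), integral_const]
      simp
    have h3 : (∫ ω, Z ω ∂μ) - t ≤ ∫ ω, max (Z ω - t) 0 ∂μ := h2 ▸ h1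
    have h4 : c * ((∫ ω, Z ω ∂μ) - t) ≤ c * ∫ ω, max (Z ω - t) 0 ∂μ :=
      mul_le_mul_of_nonneg_left h3 (by linarith)
    have h5 : 0 ≤ (c - 1) * (-t) := mul_nonneg (by linarith) (by linarith)
    show c * ∫ ω, Z ω ∂μ ≤ t + c * ∫ ω, max (Z ω - t) 0 ∂μ
    nlinarith [h4, h5]

/-- For integrable random variables `X`, `Y` on a common probability space and `β ∈ (0,1)`,
the Conditional Value-at-Risk `CVaR_β[Z] = ⨅ t, (t + (1−β)⁻¹·E[(Z−t)₊])` is sub-additive: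
`CVaR_β[X + Y] ≤ CVaR_β[X] + CVaR_β[Y]`. -/
theorem CVaR_subadditive {Ω : Type*} [MeasurableSpace Ω]
    (μ : Measure Ω) [IsProbabilityMeasure μ] (X Y : Ω → ℝ)
    (hX : Integrable X μ) (hY : Integrable Y μ)
    (β : ℝ) (hβ : β ∈ Set.Ioo (0 : ℝ) 1) :
    (⨅ t : ℝ, (t + (1 - β)⁻¹ * ∫ ω, max (X ω + Y ω - t) 0 ∂μ))
      ≤ (⨅ t : ℝ, (t + (1 - β)⁻¹ * ∫ ω, max (X ω - t) 0 ∂μ))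
      + (⨅ t : ℝ, (t + (1 - β)⁻¹ * ∫ ω, max (Y ω - t) 0 ∂μ)) := by
  obtain ⟨hβ0, hβ1⟩ := hβ
  set c : ℝ := (1 - β)⁻¹ with hc
  have hc1 : 1 ≤ c := by
    rw [hc, le_inv_comm₀] <;> linarith
  have hc0 : 0 ≤ c := by linarith
  have hbdd := cvar_bdd μ (fun ω => X ω + Y ω) (hX.add hY) c hc1
  refine le_ciInf_add_ciInf fun s t => ?_
  have key : (fun r : ℝ => r + c * ∫ ω, max (X ω + Y ω - r) 0 ∂μ) (s + t)
      ≤ (s + c * ∫ ω, max (X ω - s) 0 ∂μ) + (t + c * ∫ ω, max (Y ω - t) 0 ∂μ) := by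
    simp only
    have hiX : Integrable (fun ω => max (X ω - s) 0) μ :=
      (hX.sub (integrable_const s)).pos_part
    have hiY : Integrable (fun ω => max (Y ω - t) 0) μ :=
      (hY.sub (integrable_const t)).pos_part
    have hmono : ∫ ω, max (X ω + Y ω - (s + t)) 0 ∂μ
        ≤ ∫ ω, (max (X ω - s) 0 + max (Y ω - t) 0) ∂μ := by
      refine integral_mono (((hX.add hY).sub (integrable_const (s + t))).pos_part)
        (hiX.add hiY) fun ω => ?_
      have : X ω + Y ω - (s + t) = (X ω - s) + (Y ω - t) := by ring
      rw [this]
      exact max_le (add_le_add (le_max_left _ _) (le_max_left _ _))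
        (add_nonneg (le_max_right _ _) (le_max_right _ _))
    rw [integral_add hiX hiY] at hmono
    nlinarith [mul_le_mul_of_nonneg_left hmono hc0]
  calc (⨅ r : ℝ, (r + c * ∫ ω, max (X ω + Y ω - r) 0 ∂μ))
      ≤ (s + t) + c * ∫ ω, max (X ω + Y ω - (s + t)) 0 ∂μ := ciInf_le hbdd (s + t)
    _ ≤ _ := key
end

section
/- Let A, S, B be real n × n matrices with A invertible, S ≠ 0 and B ≠ 0, and set η = sqrt(‖B‖/‖S‖) where ‖·‖ is a submultiplicative matrix norm (e.g. the operator norm). Define 𝒮 = Aᵀ + S·A^{−1}·B and 𝒮̃ = (Aᵀ + η·S)·A^{−1}·(A + η^{−1}·B). Then ‖𝒮̃ − 𝒮‖ = ‖η·S + η^{−1}·Aᵀ·A^{−1}·B‖ ≤ (1 + ‖Aᵀ·A^{−1}‖) · sqrt(‖S‖·‖B‖). -/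
attribute [local instance] Matrix.linftyOpNormedAddCommGroup Matrix.linftyOpNormedRing
  Matrix.linftyOpNormedSpace

/-- For real `n × n` matrices `A, S, B` with `A` invertible, `S ≠ 0`, `B ≠ 0`, and the scaling
`η = √(‖B‖/‖S‖)` (in a submultiplicative matrix norm), the matching Schur complement
approximation `𝒮̃ = (Aᵀ + η·S)·A⁻¹·(A + η⁻¹·B)` of `𝒮 = Aᵀ + S·A⁻¹·B` satisfies
`‖𝒮̃ − 𝒮‖ = ‖η·S + η⁻¹·Aᵀ·A⁻¹·B‖ ≤ (1 + ‖Aᵀ·A⁻¹‖)·√(‖S‖·‖B‖)`. -/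
theorem matching_schur_complement_norm_bound (n : ℕ) (A S B : Matrix (Fin n) (Fin n) ℝ)
    (hA : IsUnit A) (hS : S ≠ 0) (hB : B ≠ 0)
    (η : ℝ) (hη : η = Real.sqrt (‖B‖ / ‖S‖)) :
    ‖(A.transpose + η • S) * A⁻¹ * (A + η⁻¹ • B) - (A.transpose + S * A⁻¹ * B)‖
        = ‖η • S + η⁻¹ • (A.transpose * A⁻¹ * B)‖ ∧
    ‖η • S + η⁻¹ • (A.transpose * A⁻¹ * B)‖
        ≤ (1 + ‖A.transpose * A⁻¹‖) * Real.sqrt (‖S‖ * ‖B‖) := by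
  have hSpos : (0:ℝ) < ‖S‖ := norm_pos_iff.mpr hS
  have hBpos : (0:ℝ) < ‖B‖ := norm_pos_iff.mpr hB
  have hηpos : (0:ℝ) < η := by
    rw [hη]; exact Real.sqrt_pos.mpr (div_pos hBpos hSpos)
  have hinv : A⁻¹ * A = 1 := Matrix.nonsing_inv_mul A ((Matrix.isUnit_iff_isUnit_det A).mp hA)
  have hinv' : A * A⁻¹ = 1 := Matrix.mul_nonsing_inv A ((Matrix.isUnit_iff_isUnit_det A).mp hA)
  constructor
  · congr 1
    have h1 : η * η⁻¹ = 1 := mul_inv_cancel₀ hηpos.ne'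
    simp only [Matrix.add_mul, Matrix.mul_add, Matrix.smul_mul, Matrix.mul_smul,
      Matrix.mul_assoc, hinv, Matrix.mul_one, smul_add, smul_smul, h1,
      inv_mul_cancel₀ hηpos.ne', one_smul]
    abel
  · have h1 : ‖η • S + η⁻¹ • (A.transpose * A⁻¹ * B)‖
        ≤ η * ‖S‖ + η⁻¹ * (‖A.transpose * A⁻¹‖ * ‖B‖) := by
      calc ‖η • S + η⁻¹ • (A.transpose * A⁻¹ * B)‖
          ≤ ‖η • S‖ + ‖η⁻¹ • (A.transpose * A⁻¹ * B)‖ := norm_add_le _ _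
        _ ≤ η * ‖S‖ + η⁻¹ * (‖A.transpose * A⁻¹‖ * ‖B‖) := by
            rw [norm_smul, norm_smul, Real.norm_of_nonneg hηpos.le,
              Real.norm_of_nonneg (inv_nonneg.mpr hηpos.le)]
            gcongr
            exact norm_mul_le _ _
    have hsq : η ^ 2 = ‖B‖ / ‖S‖ := by
      rw [hη]; exact Real.sq_sqrt (by positivity)
    have hηS : η * ‖S‖ = Real.sqrt (‖S‖ * ‖B‖) := by
      have h2 : (η * ‖S‖) ^ 2 = ‖S‖ * ‖B‖ := by
        rw [mul_pow, hsq]; field_simp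
      rw [← h2, Real.sqrt_sq (by positivity)]
    have hηB : η⁻¹ * ‖B‖ = Real.sqrt (‖S‖ * ‖B‖) := by
      have h2 : (η⁻¹ * ‖B‖) ^ 2 = ‖S‖ * ‖B‖ := by
        rw [mul_pow, inv_pow, hsq]; field_simp
      rw [← h2, Real.sqrt_sq (by positivity)]
    calc ‖η • S + η⁻¹ • (A.transpose * A⁻¹ * B)‖
        ≤ η * ‖S‖ + η⁻¹ * (‖A.transpose * A⁻¹‖ * ‖B‖) := h1
      _ = Real.sqrt (‖S‖ * ‖B‖) + ‖A.transpose * A⁻¹‖ * (η⁻¹ * ‖B‖) := by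
          rw [hηS]; ring
      _ = (1 + ‖A.transpose * A⁻¹‖) * Real.sqrt (‖S‖ * ‖B‖) := by
          rw [hηB]; ring
end
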